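/- Let n ≥ 1, let L_1, …, L_n be nonzero real numbers, let X_1, …, X_{2n} be the anisotropic Heisenberg vector fields on ℝ^{2n+1}, let w_1, …, w_{2n} be the weights w_j = 1/(2|L_j|) for 1 ≤ j ≤ n and w_j = 1/(2|L_{j−n}|) for n+1 ≤ j ≤ 2n, and set Q = 2n + 2. Define ρ(x_1,…,x_{2n},t) = ( (Σ_{j=1}^{n} 2|L_j| x_j² + Σ_{j=n+1}^{2n} 2|L_{j−n}| x_j²)² + 16 t² )^{1/4} and u = log ρ. Then u satisfies the weighted Q-Laplace equation Δ_Q u = M(u)^{Q−2} Σ_{i=1}^{2n} w_i X_i(X_i u) + (Q−2) M(u)^{Q−4} Σ_{i,j=1}^{2n} w_i w_j X_i(X_j u) · X_i u · X_j u = 0 at every point of ℝ^{2n+1} \ {0} where M(u) ≠ 0. -/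

import Mathlib

/-- Partial derivative of `f : ℝ^m → ℝ` in the `i`-th coordinate direction. -/
noncomputable def pderiv' {m : ℕ} (i : Fin m) (f : (Fin m → ℝ) → ℝ) (q : Fin m → ℝ) : ℝ :=
  fderiv ℝ f q (Pi.single i 1)

/-- The anisotropic Heisenberg vector fields on ℝ^{2n+1}. -/
noncomputable def X (n : ℕ) (L : Fin n → ℝ) (j : Fin (2*n))
    (f : (Fin (2*n+1) → ℝ) → ℝ) (q : Fin (2*n+1) → ℝ) : ℝ :=
  pderiv' ⟨(j : ℕ), by have := j.isLt; omega⟩ f q +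
    (if h : (j : ℕ) < n then
        -(L ⟨(j : ℕ), h⟩) * q ⟨(j : ℕ) + n, by have := j.isLt; omega⟩
      else
        (L ⟨(j : ℕ) - n, by have := j.isLt; omega⟩) * q ⟨(j : ℕ) - n, by have := j.isLt; omega⟩) *
      pderiv' ⟨2*n, by omega⟩ f q

/-- The weights `w_j = 1/(2|L_j|)` for `1 ≤ j ≤ n` and `w_j = 1/(2|L_{j−n}|)` for
`n+1 ≤ j ≤ 2n`. -/
noncomputable def wgt (n : ℕ) (L : Fin n → ℝ) (j : Fin (2*n)) : ℝ :=
  if h : (j : ℕ) < n then 1 / (2 * |L ⟨(j : ℕ), h⟩|)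
  else 1 / (2 * |L ⟨(j : ℕ) - n, by have := j.isLt; omega⟩|)

/-- `M(f) = (Σ_{j=1}^{2n} w_j (X_j f)²)^{1/2}`. -/
noncomputable def Mfun (n : ℕ) (L : Fin n → ℝ) (f : (Fin (2*n+1) → ℝ) → ℝ)
    (q : Fin (2*n+1) → ℝ) : ℝ :=
  Real.sqrt (∑ j : Fin (2*n), wgt n L j * (X n L j f q)^2)

/-- The gauge `ρ = ((Σ_{j=1}^{n} 2|L_j| x_j² + Σ_{j=n+1}^{2n} 2|L_{j−n}| x_j²)² + 16 t²)^{1/4}`. -/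
noncomputable def rho (n : ℕ) (L : Fin n → ℝ) (q : Fin (2*n+1) → ℝ) : ℝ :=
  ((∑ j : Fin (2*n),
      (if h : (j : ℕ) < n then 2 * |L ⟨(j : ℕ), h⟩|
       else 2 * |L ⟨(j : ℕ) - n, by have := j.isLt; omega⟩|) *
        (q ⟨(j : ℕ), by have := j.isLt; omega⟩)^2)^2
    + 16 * (q ⟨2*n, by omega⟩)^2) ^ ((1:ℝ)/4)

/-!
Write `c_j = 2|L_j|` (indices mod `n`), `G = ∑ c_j x_j²` and `P = G² + 16 t² = ρ⁴`. With the partner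
index `σ j = j ± n` and a sign `τ_j` satisfying `τ_{σ j} = -τ_j`, the fields are
`X_j = ∂_{x_j} + ½ τ_j c_j x_{σ j} ∂_t`, so `X_j P = 4 c_j A_j` with `A_j = x_j G + 4 τ_j t x_{σ j}`,
and `u = ¼ log P` has `X_j u = c_j A_j / P`. The cross terms `c_j τ_j x_j x_{σ j}` cancel under
`j ↦ σ j`, which gives `∑ c_j A_j² = G P` and `∑ c_j A_j x_j = G²`. Hence `M² = G / P`,
`∑ w_i X_i X_i u = 2n G / P`, and, the weights being constant, the second-order term is
`½ ∑ w_i X_i u · X_i (M²) = -G² / P²`. Altogether `Δ_Q u = M^{Q-4} (2n - (Q - 2)) G² / P² = 0`.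
-/

noncomputable section

namespace AnisotropicHeisenberg

open Finset Filter Topology

variable {n : ℕ} (L : Fin n → ℝ)

def partner (j : Fin (2*n)) : Fin (2*n) :=
  if h : (j : ℕ) < n then ⟨(j : ℕ) + n, by omega⟩ else ⟨(j : ℕ) - n, by have := j.isLt; omega⟩

def coef (j : Fin (2*n)) : ℝ :=
  if h : (j : ℕ) < n then 2 * |L ⟨(j : ℕ), h⟩|
  else 2 * |L ⟨(j : ℕ) - n, by have := j.isLt; omega⟩|

def twist (j : Fin (2*n)) : ℝ :=
  if h : (j : ℕ) < n then -(SignType.sign (L ⟨(j : ℕ), h⟩) : ℝ)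
  else SignType.sign (L ⟨(j : ℕ) - n, by have := j.isLt; omega⟩)

lemma partner_partner (j : Fin (2*n)) : partner (partner j) = j := by
  have := j.isLt
  rcases lt_or_ge (j : ℕ) n with h | h
  · simp [partner, h]
  · have h' : (j : ℕ) - n < n := by omega
    simp [partner, h', not_lt.2 h, Fin.ext_iff]
    omega

lemma partner_ne (j : Fin (2*n)) : partner j ≠ j := by
  have := j.isLt
  rcases lt_or_ge (j : ℕ) n with h | h
  · simp [partner, h, Fin.ext_iff]
    omega
  · simp [partner, not_lt.2 h, Fin.ext_iff]
    omega

lemma sum_comp_partner (F : Fin (2*n) → ℝ) : ∑ j, F (partner j) = ∑ j, F j :=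
  (Function.Involutive.bijective (f := partner) partner_partner).sum_comp F

lemma coef_partner (j : Fin (2*n)) : coef L (partner j) = coef L j := by
  have := j.isLt
  rcases lt_or_ge (j : ℕ) n with h | h
  · simp [coef, partner, h]
  · have h' : (j : ℕ) - n < n := by omega
    simp [coef, partner, h', not_lt.2 h]

lemma twist_partner (j : Fin (2*n)) : twist L (partner j) = -twist L j := by
  have := j.isLt
  rcases lt_or_ge (j : ℕ) n with h | h
  · simp [twist, partner, h]
  · have h' : (j : ℕ) - n < n := by omega
    simp [twist, partner, h', not_lt.2 h]

lemma wgt_eq_inv_coef (j : Fin (2*n)) : wgt n L j = (coef L j)⁻¹ := by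
  unfold wgt coef
  split_ifs <;> rw [one_div]

lemma coef_nonneg (j : Fin (2*n)) : 0 ≤ coef L j := by
  unfold coef
  split_ifs <;> positivity

section NonzeroCoefficients

variable {L} (hL : ∀ k, L k ≠ 0)
include hL

lemma coef_pos (j : Fin (2*n)) : 0 < coef L j := by
  unfold coef
  split_ifs <;> simp [hL]

lemma twist_mul_self (j : Fin (2*n)) : twist L j * twist L j = 1 := by
  have sign_mul_self_of_ne {a : ℝ} (ha : a ≠ 0) : (SignType.sign a * SignType.sign a : ℝ) = 1 := by
    rcases ha.lt_or_gt with h | h <;> simp [h]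
  unfold twist
  split_ifs <;> simp [sign_mul_self_of_ne (hL _)]

end NonzeroCoefficients

def frame (j : Fin (2*n)) (q : Fin (2*n+1) → ℝ) : Fin (2*n+1) → ℝ :=
  Pi.single j.castSucc 1 +
    (twist L j * coef L j * q (partner j).castSucc / 2) • Pi.single (Fin.last (2*n)) 1

lemma X_eq_fderiv (j : Fin (2*n)) (f : (Fin (2*n+1) → ℝ) → ℝ) (q : Fin (2*n+1) → ℝ) :
    X n L j f q = fderiv ℝ f q (frame L j q) := by
  have hcoef : (if h : (j : ℕ) < n then -(L ⟨(j : ℕ), h⟩) * q ⟨(j : ℕ) + n, by omega⟩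
      else L ⟨(j : ℕ) - n, by have := j.isLt; omega⟩ * q ⟨(j : ℕ) - n, by have := j.isLt; omega⟩)
      = twist L j * coef L j * q (partner j).castSucc / 2 := by
    unfold twist coef partner
    split_ifs <;>
    · rw [Fin.castSucc_mk]
      nth_rw 1 [← sign_mul_abs (L _)]
      ring
  rw [frame, map_add, map_smul, smul_eq_mul, ← hcoef]
  rfl

def horizGradSq (f : (Fin (2*n+1) → ℝ) → ℝ) (q : Fin (2*n+1) → ℝ) : ℝ :=
  ∑ i, wgt n L i * X n L i f q ^ 2

section FrameCalculus

variable {L} {j : Fin (2*n)} {f g : (Fin (2*n+1) → ℝ) → ℝ} {q : Fin (2*n+1) → ℝ}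

lemma X_congr_of_eventuallyEq (h : f =ᶠ[𝓝 q] g) : X n L j f q = X n L j g q := by
  rw [X_eq_fderiv, X_eq_fderiv, h.fderiv_eq]

lemma X_add (hf : DifferentiableAt ℝ f q) (hg : DifferentiableAt ℝ g q) :
    X n L j (fun x => f x + g x) q = X n L j f q + X n L j g q := by
  simp [X_eq_fderiv, fderiv_fun_add hf hg]

lemma X_mul (hf : DifferentiableAt ℝ f q) (hg : DifferentiableAt ℝ g q) :
    X n L j (fun x => f x * g x) q = f q * X n L j g q + g q * X n L j f q := by
  simp [X_eq_fderiv, fderiv_fun_mul hf hg]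

lemma X_const_mul (c : ℝ) (hf : DifferentiableAt ℝ f q) :
    X n L j (fun x => c * f x) q = c * X n L j f q := by
  simp [X_eq_fderiv, fderiv_const_mul hf]

lemma X_pow (m : ℕ) (hf : DifferentiableAt ℝ f q) :
    X n L j (fun x => f x ^ m) q = m * f q ^ (m - 1) * X n L j f q := by
  simp [X_eq_fderiv, fderiv_fun_pow m hf]

lemma X_sum {ι : Type*} (s : Finset ι) {F : ι → (Fin (2*n+1) → ℝ) → ℝ}
    (hF : ∀ i ∈ s, DifferentiableAt ℝ (F i) q) :
    X n L j (fun x => ∑ i ∈ s, F i x) q = ∑ i ∈ s, X n L j (F i) q := by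
  simp [X_eq_fderiv, fderiv_fun_sum hF]

lemma X_inv (hg : DifferentiableAt ℝ g q) (hg0 : g q ≠ 0) :
    X n L j (fun x => (g x)⁻¹) q = -X n L j g q / g q ^ 2 := by
  have h : HasFDerivAt (fun x => (g x)⁻¹) ((-(g q ^ 2)⁻¹) • fderiv ℝ g q) q :=
    (hasDerivAt_inv hg0).comp_hasFDerivAt q hg.hasFDerivAt
  rw [X_eq_fderiv, X_eq_fderiv, h.fderiv]
  simp [div_eq_inv_mul]

lemma X_div (hf : DifferentiableAt ℝ f q) (hg : DifferentiableAt ℝ g q) (hg0 : g q ≠ 0) :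
    X n L j (fun x => f x / g x) q = (X n L j f q * g q - f q * X n L j g q) / g q ^ 2 := by
  simp only [div_eq_mul_inv]
  rw [X_mul hf (hg.fun_inv hg0), X_inv hg hg0]
  field_simp
  ring

lemma X_log (hf : DifferentiableAt ℝ f q) (hf0 : f q ≠ 0) :
    X n L j (fun x => Real.log (f x)) q = X n L j f q / f q := by
  simp [X_eq_fderiv, fderiv.log hf hf0, div_eq_inv_mul]

lemma X_apply_castSucc (k : Fin (2*n)) :
    X n L j (fun x => x k.castSucc) q = if k = j then 1 else 0 := by
  simp [X_eq_fderiv, (hasFDerivAt_apply _ q).fderiv, frame, Fin.castSucc_ne_last, Pi.single_apply]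

lemma X_apply_last :
    X n L j (fun x => x (Fin.last (2*n))) q = twist L j * coef L j * q (partner j).castSucc / 2 := by
  simp [X_eq_fderiv, (hasFDerivAt_apply _ q).fderiv, frame, Fin.castSucc_ne_last]

lemma X_horizGradSq (hf : ∀ i, DifferentiableAt ℝ (X n L i f) q) :
    X n L j (horizGradSq L f) q = 2 * ∑ i, wgt n L i * X n L i f q * X n L j (X n L i f) q := by
  unfold horizGradSq
  rw [X_sum (F := fun i x => wgt n L i * X n L i f x ^ 2) _
    fun i _ => ((hf i).pow 2).const_mul _, mul_sum]
  refine sum_congr rfl fun i _ => ?_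
  rw [X_const_mul (f := fun x => X n L i f x ^ 2) _ ((hf i).pow 2), X_pow 2 (hf i)]
  push_cast
  ring

lemma two_mul_sum_sum_wgt_mul_X_X (hf : ∀ i, DifferentiableAt ℝ (X n L i f) q) :
    2 * ∑ i, ∑ j, wgt n L i * wgt n L j * X n L i (X n L j f) q * X n L i f q * X n L j f q
      = ∑ i, wgt n L i * X n L i f q * X n L i (horizGradSq L f) q := by
  rw [mul_sum]
  refine sum_congr rfl fun i _ => ?_
  rw [X_horizGradSq hf, mul_sum, mul_sum, mul_sum]
  refine sum_congr rfl fun j _ => ?_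
  ring

end FrameCalculus

def horizNormSq (q : Fin (2*n+1) → ℝ) : ℝ := ∑ k, coef L k * q k.castSucc ^ 2

def gaugeFourth (q : Fin (2*n+1) → ℝ) : ℝ := horizNormSq L q ^ 2 + 16 * q (Fin.last (2*n)) ^ 2

def gaugeFactor (j : Fin (2*n)) (q : Fin (2*n+1) → ℝ) : ℝ :=
  q j.castSucc * horizNormSq L q + 4 * twist L j * q (Fin.last (2*n)) * q (partner j).castSucc

def logGauge : (Fin (2*n+1) → ℝ) → ℝ := fun q => Real.log (rho n L q)

lemma rho_eq_gaugeFourth_rpow (q : Fin (2*n+1) → ℝ) :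
    rho n L q = gaugeFourth L q ^ (1 / 4 : ℝ) := rfl

lemma differentiable_horizNormSq : Differentiable ℝ (horizNormSq L) := by
  unfold horizNormSq
  fun_prop

lemma differentiable_gaugeFourth : Differentiable ℝ (gaugeFourth L) := by
  unfold gaugeFourth horizNormSq
  fun_prop

lemma differentiable_gaugeFactor (j : Fin (2*n)) : Differentiable ℝ (gaugeFactor L j) := by
  unfold gaugeFactor horizNormSq
  fun_prop

variable {L} {j : Fin (2*n)} {q : Fin (2*n+1) → ℝ}

lemma horizNormSq_nonneg : 0 ≤ horizNormSq L q :=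
  sum_nonneg fun k _ => mul_nonneg (coef_nonneg L k) (sq_nonneg _)

lemma gaugeFourth_pos (hL : ∀ k, L k ≠ 0) (hq : q ≠ 0) : 0 < gaugeFourth L q := by
  refine lt_of_le_of_ne (by unfold gaugeFourth; positivity) fun h => hq ?_
  obtain ⟨hG, ht⟩ := (add_eq_zero_iff_of_nonneg (sq_nonneg _) (by positivity)).1 h.symm
  have hx (k : Fin (2*n)) : q k.castSucc = 0 := by
    have := (sum_eq_zero_iff_of_nonneg fun k _ => mul_nonneg (coef_nonneg L k) (sq_nonneg _)).1
      (pow_eq_zero_iff two_ne_zero |>.1 hG) k (mem_univ k)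
    simpa [(coef_pos hL k).ne'] using this
  funext k
  induction k using Fin.lastCases with
  | last => simpa using ht
  | cast k => exact hx k

lemma eventually_gaugeFourth_pos (hq : 0 < gaugeFourth L q) : ∀ᶠ x in 𝓝 q, 0 < gaugeFourth L x :=
  (differentiable_gaugeFourth L).continuous.continuousAt.preimage_mem_nhds (Ioi_mem_nhds hq)

lemma X_horizNormSq : X n L j (horizNormSq L) q = 2 * coef L j * q j.castSucc := by
  unfold horizNormSq
  rw [X_sum _ fun k _ => by fun_prop]
  simp (disch := fun_prop) [X_const_mul, X_pow, X_apply_castSucc]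
  ring

lemma X_gaugeFourth : X n L j (gaugeFourth L) q = 4 * coef L j * gaugeFactor L j q := by
  have hG := differentiable_horizNormSq L q
  unfold gaugeFourth
  rw [X_add (by fun_prop) (by fun_prop), X_pow 2 hG, X_const_mul 16 (by fun_prop),
    X_pow 2 (by fun_prop), X_horizNormSq, X_apply_last, gaugeFactor]
  push_cast
  ring

lemma X_gaugeFactor_self (hL : ∀ k, L k ≠ 0) :
    X n L j (gaugeFactor L j) q
      = horizNormSq L q + 2 * coef L j * (q j.castSucc ^ 2 + q (partner j).castSucc ^ 2) := by
  have hG := differentiable_horizNormSq L q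
  unfold gaugeFactor
  rw [X_add (by fun_prop) (by fun_prop), X_mul (by fun_prop) hG, X_mul (by fun_prop) (by fun_prop),
    X_const_mul _ (by fun_prop), X_horizNormSq, X_apply_castSucc, X_apply_castSucc, X_apply_last,
    if_pos rfl, if_neg (partner_ne j)]
  linear_combination (2 * coef L j * q (partner j).castSucc ^ 2) * twist_mul_self hL j

lemma sum_coef_mul_partner_sq : ∑ j, coef L j * q (partner j).castSucc ^ 2 = horizNormSq L q := by
  simpa [coef_partner, horizNormSq] using sum_comp_partner fun j => coef L j * q j.castSucc ^ 2

lemma sum_coef_mul_twist_mul_partner :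
    ∑ j, coef L j * twist L j * q j.castSucc * q (partner j).castSucc = 0 := by
  have h := sum_comp_partner fun j => coef L j * twist L j * q j.castSucc * q (partner j).castSucc
  have antisymm (j : Fin (2*n)) : coef L (partner j) * twist L (partner j) * q (partner j).castSucc
      * q (partner (partner j)).castSucc
        = -(coef L j * twist L j * q j.castSucc * q (partner j).castSucc) := by
    rw [coef_partner, twist_partner, partner_partner]
    ring
  simp only [antisymm, sum_neg_distrib] at h
  linarith

lemma sum_coef_mul_gaugeFactor_mul :
    ∑ j, coef L j * gaugeFactor L j q * q j.castSucc = horizNormSq L q ^ 2 := by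
  set G := horizNormSq L q
  set t := q (Fin.last (2*n))
  calc ∑ j, coef L j * gaugeFactor L j q * q j.castSucc
      = ∑ j, (G * (coef L j * q j.castSucc ^ 2)
          + 4 * t * (coef L j * twist L j * q j.castSucc * q (partner j).castSucc)) :=
        sum_congr rfl fun j _ => by rw [gaugeFactor]; ring
    _ = G ^ 2 := by
        rw [sum_add_distrib, ← mul_sum, ← mul_sum, sum_coef_mul_twist_mul_partner,
          show ∑ j, coef L j * q j.castSucc ^ 2 = G from rfl]
        ring

lemma sum_coef_mul_gaugeFactor_sq (hL : ∀ k, L k ≠ 0) :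
    ∑ j, coef L j * gaugeFactor L j q ^ 2 = horizNormSq L q * gaugeFourth L q := by
  set G := horizNormSq L q
  set t := q (Fin.last (2*n))
  calc ∑ j, coef L j * gaugeFactor L j q ^ 2
      = ∑ j, (G ^ 2 * (coef L j * q j.castSucc ^ 2)
          + 8 * G * t * (coef L j * twist L j * q j.castSucc * q (partner j).castSucc)
          + 16 * t ^ 2 * (coef L j * q (partner j).castSucc ^ 2)) :=
        sum_congr rfl fun j _ => by
          rw [gaugeFactor]
          linear_combination 16 * coef L j * t ^ 2 * q (partner j).castSucc ^ 2 * twist_mul_self hL j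
    _ = G * gaugeFourth L q := by
        rw [sum_add_distrib, sum_add_distrib, ← mul_sum, ← mul_sum, ← mul_sum,
          sum_coef_mul_twist_mul_partner, sum_coef_mul_partner_sq,
          show ∑ j, coef L j * q j.castSucc ^ 2 = G from rfl, gaugeFourth]
        ring

lemma logGauge_eventuallyEq (hq : 0 < gaugeFourth L q) :
    logGauge L =ᶠ[𝓝 q] fun x => 4⁻¹ * Real.log (gaugeFourth L x) := by
  filter_upwards [eventually_gaugeFourth_pos hq] with x hx
  rw [logGauge, rho_eq_gaugeFourth_rpow, Real.log_rpow hx]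
  ring

lemma X_logGauge (hq : 0 < gaugeFourth L q) :
    X n L j (logGauge L) q = coef L j * gaugeFactor L j q / gaugeFourth L q := by
  rw [X_congr_of_eventuallyEq (logGauge_eventuallyEq hq),
    X_const_mul _ ((differentiable_gaugeFourth L q).log hq.ne'),
    X_log (differentiable_gaugeFourth L q) hq.ne', X_gaugeFourth]
  ring

lemma X_logGauge_eventuallyEq (hq : 0 < gaugeFourth L q) :
    X n L j (logGauge L) =ᶠ[𝓝 q] fun x => coef L j * gaugeFactor L j x / gaugeFourth L x := by
  filter_upwards [eventually_gaugeFourth_pos hq] with x hx using X_logGauge hx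

lemma differentiableAt_X_logGauge (hq : 0 < gaugeFourth L q) :
    DifferentiableAt ℝ (X n L j (logGauge L)) q := by
  refine DifferentiableAt.congr_of_eventuallyEq ?_ (X_logGauge_eventuallyEq hq)
  simp only [div_eq_mul_inv]
  exact ((differentiable_gaugeFactor L j q).const_mul _).mul
    ((differentiable_gaugeFourth L q).inv hq.ne')

section LogGauge

variable (hL : ∀ k, L k ≠ 0) (hq : 0 < gaugeFourth L q)
include hL hq

lemma X_X_logGauge_self :
    X n L j (X n L j (logGauge L)) q
      = coef L j * ((horizNormSq L q + 2 * coef L j * (q j.castSucc ^ 2 + q (partner j).castSucc ^ 2))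
          * gaugeFourth L q - 4 * coef L j * gaugeFactor L j q ^ 2) / gaugeFourth L q ^ 2 := by
  rw [X_congr_of_eventuallyEq (X_logGauge_eventuallyEq hq),
    X_div ((differentiable_gaugeFactor L j q).const_mul _) (differentiable_gaugeFourth L q) hq.ne',
    X_const_mul _ (differentiable_gaugeFactor L j q), X_gaugeFactor_self hL, X_gaugeFourth]
  ring

lemma horizGradSq_logGauge :
    horizGradSq L (logGauge L) q = horizNormSq L q / gaugeFourth L q := by
  have hP := hq.ne'
  calc horizGradSq L (logGauge L) q
      = ∑ i, coef L i * gaugeFactor L i q ^ 2 / gaugeFourth L q ^ 2 :=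
        sum_congr rfl fun i _ => by
          rw [X_logGauge hq, wgt_eq_inv_coef]
          field_simp [(coef_pos hL i).ne']
    _ = horizNormSq L q / gaugeFourth L q := by
        rw [← sum_div, sum_coef_mul_gaugeFactor_sq hL]
        field_simp

lemma horizGradSq_logGauge_eventuallyEq :
    horizGradSq L (logGauge L) =ᶠ[𝓝 q] fun x => horizNormSq L x / gaugeFourth L x := by
  filter_upwards [eventually_gaugeFourth_pos hq] with x hx using horizGradSq_logGauge hL hx

lemma sum_wgt_mul_X_X_logGauge :
    ∑ i, wgt n L i * X n L i (X n L i (logGauge L)) q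
      = 2 * n * horizNormSq L q / gaugeFourth L q := by
  have hP := hq.ne'
  calc ∑ i, wgt n L i * X n L i (X n L i (logGauge L)) q
      = ∑ i, (horizNormSq L q / gaugeFourth L q
          + 2 / gaugeFourth L q * (coef L i * q i.castSucc ^ 2)
          + 2 / gaugeFourth L q * (coef L i * q (partner i).castSucc ^ 2)
          - 4 / gaugeFourth L q ^ 2 * (coef L i * gaugeFactor L i q ^ 2)) :=
        sum_congr rfl fun i _ => by
          rw [X_X_logGauge_self hL hq, wgt_eq_inv_coef]
          field_simp [(coef_pos hL i).ne']
          ring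
    _ = 2 * n * horizNormSq L q / gaugeFourth L q := by
        rw [sum_sub_distrib, sum_add_distrib, sum_add_distrib, sum_const, card_univ,
          Fintype.card_fin, nsmul_eq_mul, ← mul_sum, ← mul_sum, ← mul_sum,
          sum_coef_mul_partner_sq, sum_coef_mul_gaugeFactor_sq hL,
          show ∑ i, coef L i * q i.castSucc ^ 2 = horizNormSq L q from rfl]
        field_simp
        push_cast
        ring

lemma sum_sum_wgt_mul_X_X_logGauge :
    ∑ i, ∑ j, wgt n L i * wgt n L j * X n L i (X n L j (logGauge L)) q
        * X n L i (logGauge L) q * X n L j (logGauge L) q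
      = -horizNormSq L q ^ 2 / gaugeFourth L q ^ 2 := by
  have hP := hq.ne'
  have key := two_mul_sum_sum_wgt_mul_X_X fun i => differentiableAt_X_logGauge (j := i) hq
  have hsummand (i : Fin (2*n)) :
      wgt n L i * X n L i (logGauge L) q * X n L i (horizGradSq L (logGauge L)) q
        = 2 / gaugeFourth L q ^ 2 * (coef L i * gaugeFactor L i q * q i.castSucc)
          - 4 * horizNormSq L q / gaugeFourth L q ^ 3 * (coef L i * gaugeFactor L i q ^ 2) := by
    rw [X_congr_of_eventuallyEq (horizGradSq_logGauge_eventuallyEq hL hq),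
      X_div (differentiable_horizNormSq L q) (differentiable_gaugeFourth L q) hP,
      X_horizNormSq, X_gaugeFourth, X_logGauge hq, wgt_eq_inv_coef]
    field_simp [(coef_pos hL i).ne']
  rw [sum_congr rfl fun i _ => hsummand i, sum_sub_distrib, ← mul_sum, ← mul_sum,
    sum_coef_mul_gaugeFactor_mul, sum_coef_mul_gaugeFactor_sq hL] at key
  field_simp at key ⊢
  linear_combination key / 2

end LogGauge

end AnisotropicHeisenberg

end

open AnisotropicHeisenberg in
theorem log_rho_weighted_Q_harmonic_general
    (n : ℕ) (L : Fin n → ℝ) (hL : ∀ j, L j ≠ 0)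
    (Q : ℝ) (hQ : Q = 2 * n + 2)
    (u : (Fin (2*n+1) → ℝ) → ℝ) (hu : u = fun q => Real.log (rho n L q)) :
    ∀ q : Fin (2*n+1) → ℝ, q ≠ 0 → Mfun n L u q ≠ 0 →
      (Mfun n L u q) ^ (Q - 2) * ∑ i : Fin (2*n), wgt n L i * X n L i (X n L i u) q
        + (Q - 2) * (Mfun n L u q) ^ (Q - 4) *
            ∑ i : Fin (2*n), ∑ j : Fin (2*n),
              wgt n L i * wgt n L j * X n L i (X n L j u) q * X n L i u q * X n L j u q
      = 0 := by
  intro q hq hM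
  obtain rfl : u = logGauge L := hu
  have hP := gaugeFourth_pos hL hq
  have hMsq : Mfun n L (logGauge L) q ^ 2 = horizNormSq L q / gaugeFourth L q := by
    rw [Mfun, ← horizGradSq, horizGradSq_logGauge hL hP,
      Real.sq_sqrt (div_nonneg horizNormSq_nonneg hP.le)]
  have hpow : Mfun n L (logGauge L) q ^ (Q - 2)
      = Mfun n L (logGauge L) q ^ (Q - 4) * Mfun n L (logGauge L) q ^ 2 := by
    have hMpos : 0 < Mfun n L (logGauge L) q := (Real.sqrt_nonneg _).lt_of_ne' hM
    rw [← Real.rpow_natCast, ← Real.rpow_add hMpos]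
    congr 1
    push_cast
    ring
  rw [hpow, hMsq, sum_wgt_mul_X_X_logGauge hL hP, sum_sum_wgt_mul_X_X_logGauge hL hP, hQ]
  field_simp
  ring

theorem log_rho_weighted_Q_harmonic
    (n : ℕ) (hn : 1 ≤ n) (L : Fin n → ℝ) (hL : ∀ j, L j ≠ 0)
    (Q : ℝ) (hQ : Q = 2 * n + 2)
    (u : (Fin (2*n+1) → ℝ) → ℝ) (hu : u = fun q => Real.log (rho n L q)) :
    ∀ q : Fin (2*n+1) → ℝ, q ≠ 0 → Mfun n L u q ≠ 0 →
      (Mfun n L u q) ^ (Q - 2) * ∑ i : Fin (2*n), wgt n L i * X n L i (X n L i u) q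
        + (Q - 2) * (Mfun n L u q) ^ (Q - 4) *
            ∑ i : Fin (2*n), ∑ j : Fin (2*n),
              wgt n L i * wgt n L j * X n L i (X n L j u) q * X n L i u q * X n L j u q
      = 0 :=
  log_rho_weighted_Q_harmonic_general n L hL Q hQ u hu
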